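/- arXiv:2111.02635 — 5 statements merged into one kernel-verified Lean document; each statement's English description precedes it below -/
import Mathlib

section
/- (Terras; Everett) For every k ≥ 1: (i) if m ≡ n (mod 2^k) then T^[j](m) ≡ T^[j](n) (mod 2) for all 0 ≤ j < k; and (ii) the induced map from ℤ/2^kℤ to (ℤ/2ℤ)^k sending the residue class of n to its parity vector (T^[0](n) mod 2, T^[1](n) mod 2, ..., T^[k−1](n) mod 2) is a bijection. -/
/-!
Writing `r = x % 2`, one has `2 * T x = (2r + 1) x + r`. Hence if `m ≡ n (mod 2)` then
`2 (T n - T m) = (2r + 1)(n - m)` with `2r + 1` odd, so `m ≡ n (mod 2^(k+1))` holds exactly when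
`m ≡ n (mod 2)` and `T m ≡ T n (mod 2^k)`. Iterating, `m ≡ n (mod 2^k)` holds exactly when the
parity vectors of length `k` of `m` and `n` agree. So the parity vector is a well-defined and
injective map `ℤ/2^kℤ → (ℤ/2ℤ)^k`, which is bijective since both sides have `2^k` elements.
-/

/-- The 3x+1 function on the integers. -/
def T (x : ℤ) : ℤ := if x % 2 = 1 then (3 * x + 1) / 2 else x / 2

theorem two_mul_T (x : ℤ) : 2 * T x = (2 * (x % 2) + 1) * x + x % 2 := by
  unfold T
  split_ifs with h
  · rw [Int.mul_ediv_cancel' (by omega), h]; ring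
  · rw [Int.mul_ediv_cancel' (by omega), show x % 2 = 0 by omega]; ring

theorem T_modEq_two_pow_succ_iff (k : ℕ) (m n : ℤ) :
    m ≡ n [ZMOD 2 ^ (k + 1)] ↔ m ≡ n [ZMOD 2] ∧ T m ≡ T n [ZMOD 2 ^ k] := by
  by_cases h2 : m ≡ n [ZMOD 2]
  · have hdiff : 2 * (T n - T m) = (2 * (m % 2) + 1) * (n - m) := by
      have hmn : m % 2 = n % 2 := h2
      linear_combination two_mul_T n - two_mul_T m - (2 * n + 1) * hmn
    have hodd : IsCoprime ((2 : ℤ) ^ (k + 1)) (2 * (m % 2) + 1) :=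
      IsCoprime.pow_left ⟨-(m % 2), 1, by ring⟩
    simp only [h2, true_and, Int.modEq_iff_dvd]
    calc 2 ^ (k + 1) ∣ n - m ↔ 2 ^ (k + 1) ∣ (2 * (m % 2) + 1) * (n - m) :=
          ⟨fun h => dvd_mul_of_dvd_right h _, hodd.dvd_of_dvd_mul_left⟩
      _ ↔ 2 * 2 ^ k ∣ 2 * (T n - T m) := by rw [hdiff, pow_succ']
      _ ↔ 2 ^ k ∣ T n - T m := mul_dvd_mul_iff_left two_ne_zero
  · exact iff_of_false (fun h => h2 (h.of_dvd (dvd_pow_self 2 k.succ_ne_zero))) (by tauto)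

theorem modEq_two_pow_iff_iterate_T_modEq_two (k : ℕ) (m n : ℤ) :
    m ≡ n [ZMOD 2 ^ k] ↔ ∀ j < k, T^[j] m ≡ T^[j] n [ZMOD 2] := by
  induction k generalizing m n with
  | zero => simpa using Int.modEq_one
  | succ k ih =>
    simp only [T_modEq_two_pow_succ_iff, ih, Nat.forall_lt_succ_left, Function.iterate_succ_apply,
      Function.iterate_zero_apply]

def parityVector (k : ℕ) (n : ℤ) : Fin k → ZMod 2 := fun j => (T^[j] n : ZMod 2)

theorem parityVector_eq_iff (k : ℕ) (m n : ℤ) :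
    parityVector k m = parityVector k n ↔ m ≡ n [ZMOD 2 ^ k] := by
  simp only [modEq_two_pow_iff_iterate_T_modEq_two, funext_iff, parityVector, Fin.forall_iff,
    ZMod.intCast_eq_intCast_iff, Nat.cast_ofNat]

theorem ZMod.exists_equiv_of_eq_iff_modEq {α : Type*} [Fintype α] {N : ℕ} [NeZero N]
    (f : ℤ → α) (hf : ∀ m n, f m = f n ↔ m ≡ n [ZMOD N]) (hcard : Fintype.card α = N) :
    ∃ Φ : ZMod N ≃ α, ∀ n : ℤ, Φ n = f n := by
  have hlift (n : ℤ) : f (n : ZMod N).cast = f n :=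
    (hf _ _).2 ((ZMod.intCast_eq_intCast_iff _ _ _).1 (ZMod.intCast_zmod_cast _))
  have hinj : Function.Injective fun x : ZMod N => f x.cast := fun x y hxy => by
    rw [← ZMod.intCast_zmod_cast x, ← ZMod.intCast_zmod_cast y]
    exact (ZMod.intCast_eq_intCast_iff _ _ _).2 ((hf _ _).1 hxy)
  have hbij : Function.Bijective fun x : ZMod N => f x.cast :=
    (Fintype.bijective_iff_injective_and_card _).2 ⟨hinj, by simp [hcard]⟩
  exact ⟨Equiv.ofBijective _ hbij, hlift⟩

theorem parity_vector_bijection_general (k : ℕ) :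
    (∀ m n : ℤ, Int.ModEq (2 ^ k) m n →
        ∀ j : ℕ, j < k → Int.ModEq 2 (T^[j] m) (T^[j] n)) ∧
    (∃ Φ : ZMod (2 ^ k) ≃ (Fin k → ZMod 2),
        ∀ n : ℤ, Φ (n : ZMod (2 ^ k)) = fun j : Fin k => ((T^[(j : ℕ)] n : ℤ) : ZMod 2)) := by
  refine ⟨fun m n h => (modEq_two_pow_iff_iterate_T_modEq_two k m n).1 h, ?_⟩
  refine ZMod.exists_equiv_of_eq_iff_modEq (parityVector k) (fun m n => ?_) (by simp)
  rw [parityVector_eq_iff, Nat.cast_pow, Nat.cast_ofNat]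

/-- (Terras; Everett) For every `k ≥ 1`: (i) if `m ≡ n (mod 2^k)` then the first `k`
iterates of `m` and `n` under the 3x+1 function have the same parities, and
(ii) the induced map from `ℤ/2^kℤ` to `(ℤ/2ℤ)^k` sending the class of `n` to its
parity vector is a bijection. -/
theorem parity_vector_bijection (k : ℕ) (hk : 1 ≤ k) :
    (∀ m n : ℤ, Int.ModEq (2 ^ k) m n →
        ∀ j : ℕ, j < k → Int.ModEq 2 (T^[j] m) (T^[j] n)) ∧
    (∃ Φ : ZMod (2 ^ k) ≃ (Fin k → ZMod 2),
        ∀ n : ℤ, Φ (n : ZMod (2 ^ k)) = fun j : Fin k => ((T^[(j : ℕ)] n : ℤ) : ZMod 2)) :=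
  parity_vector_bijection_general k
end

section
/- For every integer n ≥ 1 and every integer a, the preimage under the 3x+1 function T of the residue class {x ∈ ℤ : x ≡ a (mod 2^n)} is the union of exactly two distinct residue classes modulo 2^(n+1); that is, there exist integers b₁, b₂ with b₁ ≢ b₂ (mod 2^(n+1)) such that for all integers x, T(x) ≡ a (mod 2^n) if and only if x ≡ b₁ (mod 2^(n+1)) or x ≡ b₂ (mod 2^(n+1)). (Thus T preserves the finitely additive measure on ℤ assigning mass 2^(−n) to each arithmetic progression modulo 2^n.) -/
/-- The preimage under the 3x+1 function of any residue class modulo `2^n` is the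
union of exactly two distinct residue classes modulo `2^(n+1)`. -/
theorem preimage_residue_class (n : ℕ) (hn : 1 ≤ n) (a : ℤ) :
    ∃ b₁ b₂ : ℤ, ¬ Int.ModEq (2 ^ (n + 1)) b₁ b₂ ∧
      ∀ x : ℤ, Int.ModEq (2 ^ n) (T x) a ↔
        (Int.ModEq (2 ^ (n + 1)) x b₁ ∨ Int.ModEq (2 ^ (n + 1)) x b₂) := by
  have hcop : IsCoprime (3 : ℤ) (2 ^ (n + 1)) := by
    apply IsCoprime.pow_right
    exact Int.isCoprime_iff_gcd_eq_one.mpr (by decide)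
  have hgcd : Int.gcd (2 ^ (n + 1)) 3 = 1 := by
    rw [Int.gcd_comm]; exact Int.isCoprime_iff_gcd_eq_one.mp hcop
  obtain ⟨u, v, huv⟩ := hcop
  have hc : 3 * u ≡ 1 [ZMOD (2 : ℤ) ^ (n + 1)] :=
    Int.modEq_iff_dvd.mpr ⟨v, by linear_combination -huv⟩
  have h2 : (2 : ℤ) ∣ 2 ^ (n + 1) := dvd_pow_self 2 (Nat.succ_ne_zero n)
  set b₂ : ℤ := u * (2 * a - 1) with hb₂
  have h3b₂ : 3 * b₂ ≡ 2 * a - 1 [ZMOD (2 : ℤ) ^ (n + 1)] := by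
    calc 3 * b₂ = (3 * u) * (2 * a - 1) := by ring
    _ ≡ 1 * (2 * a - 1) [ZMOD (2 : ℤ) ^ (n + 1)] := hc.mul_right _
    _ = 2 * a - 1 := by ring
  have hb₂odd : b₂ % 2 = 1 := by
    have h' := h3b₂.of_dvd h2
    rw [Int.modEq_iff_dvd] at h'
    omega
  have key2 : ∀ s t : ℤ, ((2 : ℤ) ^ (n + 1) ∣ 2 * (s - t)) ↔ (2 : ℤ) ^ n ∣ s - t := by
    intro s t
    rw [pow_succ, mul_comm ((2 : ℤ) ^ n) 2,
      mul_dvd_mul_iff_left (two_ne_zero (α := ℤ))]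
  refine ⟨2 * a, b₂, ?_, ?_⟩
  · intro h
    have h' := h.of_dvd h2
    rw [Int.modEq_iff_dvd] at h'
    omega
  · intro x
    rcases Int.emod_two_eq x with hx | hx
    · -- x even
      have hT : T x = x / 2 := by simp [T, hx]
      have heq : 2 * (a - T x) = 2 * a - x := by rw [hT]; omega
      constructor
      · intro h
        left
        rw [Int.modEq_iff_dvd] at h ⊢
        rw [← heq]
        exact (key2 _ _).mpr h
      · rintro (h | h)
        · rw [Int.modEq_iff_dvd] at h ⊢
          rw [← heq] at h
          exact (key2 _ _).mp h
        · exfalso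
          have h' := h.of_dvd h2
          rw [Int.modEq_iff_dvd] at h'
          omega
    · -- x odd
      have hT : T x = (3 * x + 1) / 2 := by simp [T, hx]
      have heq : 2 * (a - T x) = 2 * a - (3 * x + 1) := by rw [hT]; omega
      have step : (T x ≡ a [ZMOD (2 : ℤ) ^ n]) ↔ 3 * x ≡ 3 * b₂ [ZMOD (2 : ℤ) ^ (n + 1)] := by
        constructor
        · intro h
          rw [Int.modEq_iff_dvd] at h
          have h1 : 3 * x + 1 ≡ 2 * a [ZMOD (2 : ℤ) ^ (n + 1)] := by
            rw [Int.modEq_iff_dvd, ← heq]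
            exact (key2 _ _).mpr h
          have h2' : 3 * x ≡ 2 * a - 1 [ZMOD (2 : ℤ) ^ (n + 1)] := by
            simpa using h1.sub_right 1
          exact h2'.trans h3b₂.symm
        · intro h
          have h1 : 3 * x + 1 ≡ 2 * a [ZMOD (2 : ℤ) ^ (n + 1)] := by
            simpa using (h.trans h3b₂).add_right 1
          rw [Int.modEq_iff_dvd, ← heq] at h1
          rw [Int.modEq_iff_dvd]
          exact (key2 _ _).mp h1
      rw [step]
      constructor
      · intro h
        right
        have h' := Int.ModEq.cancel_left_div_gcd (by positivity) h
        rwa [hgcd, Nat.cast_one, Int.ediv_one] at h'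
      · rintro (h | h)
        · exfalso
          have h' := h.of_dvd h2
          rw [Int.modEq_iff_dvd] at h'
          omega
        · exact h.mul_left 3
end

section
/- The 2-adic extension T₂ of the 3x+1 function preserves the 2-adic (Haar) measure: if T₂ : ℤ₂ → ℤ₂ satisfies 2·T₂(x) = 3x + 1 for every x ∈ ℤ₂ not divisible by 2 and 2·T₂(x) = x for every x ∈ ℤ₂ divisible by 2, then T₂ is measurable and the pushforward of the normalized Haar measure on the compact additive group ℤ₂ under T₂ equals the Haar measure itself. -/
open MeasureTheory
open scoped ENNReal NNReal

noncomputable instance : MeasurableSpace ℤ_[2] := borel _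
instance : BorelSpace ℤ_[2] := ⟨rfl⟩

noncomputable instance : MeasurableSpace ℚ_[2] := borel _
instance : BorelSpace ℚ_[2] := ⟨rfl⟩

-- evenness set is measurable
lemma measurableSet_dvd_two : MeasurableSet {x : ℤ_[2] | (2 : ℤ_[2]) ∣ x} := by
  have h : {x : ℤ_[2] | (2 : ℤ_[2]) ∣ x} = {x : ℤ_[2] | ‖x‖ < 1} := by
    ext x
    simp only [Set.mem_setOf_eq, PadicInt.norm_lt_one_iff_dvd, Nat.cast_ofNat]
  rw [h]
  exact (isOpen_lt continuous_norm continuous_const).measurableSet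

def toQ : ℤ_[2] → ℚ_[2] := fun x => (x : ℚ_[2])

@[simp] lemma toQ_apply (x : ℤ_[2]) : toQ x = (x : ℚ_[2]) := rfl

lemma toQ_isometry : Isometry toQ := fun _ _ => rfl

lemma toQ_measurableEmbedding : MeasurableEmbedding toQ :=
  toQ_isometry.isClosedEmbedding.measurableEmbedding

lemma toQ_continuous : Continuous toQ := toQ_isometry.continuous

lemma isUnit_three : IsUnit (3 : ℤ_[2]) := by
  rw [PadicInt.isUnit_iff]
  refine le_antisymm (PadicInt.norm_le_one _) ?_
  by_contra h
  push_neg at h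
  have hdvd : ((2 : ℕ) : ℤ_[2]) ∣ 3 := (PadicInt.norm_lt_one_iff_dvd _).mp h
  have h2 : (2 : ℤ_[2]) ∣ 3 := by exact_mod_cast hdvd
  have h1 : (2 : ℤ_[2]) ∣ 1 := by
    have := h2.sub (dvd_refl (2 : ℤ_[2]))
    norm_num at this
    exact this
  have := PadicInt.isUnit_iff.mp (isUnit_of_dvd_one h1)
  have hp : ‖((2 : ℕ) : ℤ_[2])‖ = ((2 : ℕ) : ℝ)⁻¹ := PadicInt.norm_p
  norm_num at hp
  rw [hp] at this
  norm_num at this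

/-- The 2-adic extension of the 3x+1 function preserves the normalized Haar measure
on the compact additive group `ℤ₂`. -/
theorem two_adic_extension_preserves_haar (T₂ : ℤ_[2] → ℤ_[2])
    (hodd : ∀ x : ℤ_[2], ¬ (2 ∣ x) → 2 * T₂ x = 3 * x + 1)
    (heven : ∀ x : ℤ_[2], 2 ∣ x → 2 * T₂ x = x)
    (μ : Measure ℤ_[2]) [μ.IsAddHaarMeasure] [IsProbabilityMeasure μ] :
    Measurable T₂ ∧ Measure.map T₂ μ = μ := by
  classical
  have two_ne : (2 : ℤ_[2]) ≠ 0 := two_ne_zero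
  obtain ⟨c, hc3⟩ : ∃ c : ℤ_[2], 3 * c = 1 := by
    obtain ⟨u, hu⟩ := isUnit_three
    exact ⟨u.inv, by rw [← hu]; exact u.mul_inv⟩
  have cancel : ∀ a b : ℤ_[2], 2 * a = 2 * b → a = b := fun a b h =>
    mul_left_cancel₀ two_ne h
  -- translation identities
  have stepE : ∀ x t : ℤ_[2], (2 : ℤ_[2]) ∣ x → T₂ (x + 2 * t) = T₂ x + t := by
    intro x t hx
    apply cancel
    linear_combination heven _ (dvd_add hx ⟨t, rfl⟩) - heven x hx
  have stepO : ∀ x t : ℤ_[2], ¬ (2 : ℤ_[2]) ∣ x → T₂ (x + 2 * (c * t)) = T₂ x + t := by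
    intro x t hx
    have hx' : ¬ (2 : ℤ_[2]) ∣ (x + 2 * (c * t)) := by
      intro h
      exact hx (by simpa using h.sub ⟨c * t, rfl⟩)
    apply cancel
    linear_combination hodd _ hx' - hodd x hx + 2 * t * hc3
  -- measurability
  have hE := measurableSet_dvd_two
  have hemb : MeasurableEmbedding toQ := toQ_measurableEmbedding
  have hcoeT : toQ ∘ T₂ = fun x : ℤ_[2] =>
      if (2 : ℤ_[2]) ∣ x then ((x : ℚ_[2]) / 2) else ((3 * (x : ℚ_[2]) + 1) / 2) := by
    funext x
    by_cases h : (2 : ℤ_[2]) ∣ x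
    · have hx := heven x h
      have hx' : (2 : ℚ_[2]) * (T₂ x : ℚ_[2]) = (x : ℚ_[2]) := by
        have := congrArg (fun z : ℤ_[2] => (z : ℚ_[2])) hx
        push_cast at this
        exact this
      simp only [Function.comp_apply, if_pos h, toQ_apply]
      field_simp
      linear_combination hx'
    · have hx := hodd x h
      have hx' : (2 : ℚ_[2]) * (T₂ x : ℚ_[2]) = 3 * (x : ℚ_[2]) + 1 := by
        have := congrArg (fun z : ℤ_[2] => (z : ℚ_[2])) hx
        push_cast at this
        exact this
      simp only [Function.comp_apply, if_neg h, toQ_apply]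
      field_simp
      linear_combination hx'
  have hmeas : Measurable T₂ := by
    refine hemb.measurable_comp_iff.mp ?_
    rw [hcoeT]
    exact Measurable.ite hE
      ((toQ_continuous.div_const 2).measurable)
      ((((continuous_const.mul toQ_continuous).add continuous_const).div_const 2).measurable)
  refine ⟨hmeas, ?_⟩
  -- invariance of the pushforward
  set ν := Measure.map T₂ μ with hν
  haveI : IsProbabilityMeasure ν := Measure.isProbabilityMeasure_map hmeas.aemeasurable
  haveI : ν.IsAddLeftInvariant := by
    constructor
    intro g
    rw [hν, Measure.map_map (measurable_const_add g) hmeas]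
    ext s hs
    rw [Measure.map_apply ((measurable_const_add g).comp hmeas) hs,
      Measure.map_apply hmeas hs]
    set E := {x : ℤ_[2] | (2 : ℤ_[2]) ∣ x} with hEdef
    set A := ((fun x => g + x) ∘ T₂) ⁻¹' s with hA
    set B := T₂ ⁻¹' s with hB
    have hAE : A ∩ E = (fun x => x + 2 * g) ⁻¹' (B ∩ E) := by
      ext x
      simp only [Set.mem_inter_iff, Set.mem_preimage, Function.comp_apply, hEdef,
        Set.mem_setOf_eq, hA, hB]
      constructor
      · rintro ⟨h1, h2⟩
        refine ⟨?_, dvd_add h2 ⟨g, rfl⟩⟩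
        rw [stepE x g h2, add_comm]
        exact h1
      · rintro ⟨h1, h2⟩
        have hx : (2 : ℤ_[2]) ∣ x := by simpa using h2.sub ⟨g, rfl⟩
        rw [stepE x g hx] at h1
        exact ⟨by rwa [add_comm] at h1, hx⟩
    have hAO : A ∩ Eᶜ = (fun x => x + 2 * (c * g)) ⁻¹' (B ∩ Eᶜ) := by
      ext x
      simp only [Set.mem_inter_iff, Set.mem_preimage, Function.comp_apply, hEdef,
        Set.mem_compl_iff, Set.mem_setOf_eq, hA, hB]
      constructor
      · rintro ⟨h1, h2⟩
        refine ⟨?_, fun h => h2 (by simpa using h.sub ⟨c * g, rfl⟩)⟩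
        rw [stepO x g h2, add_comm]
        exact h1
      · rintro ⟨h1, h2⟩
        have hx : ¬ (2 : ℤ_[2]) ∣ x := fun h => h2 (dvd_add h ⟨c * g, rfl⟩)
        rw [stepO x g hx] at h1
        exact ⟨by rwa [add_comm] at h1, hx⟩
    calc μ A = μ (A ∩ E) + μ (A \ E) := (measure_inter_add_diff A hE).symm
      _ = μ (A ∩ E) + μ (A ∩ Eᶜ) := by rw [Set.diff_eq]
      _ = μ (B ∩ E) + μ (B ∩ Eᶜ) := by
          rw [hAE, hAO, measure_preimage_add_right, measure_preimage_add_right]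
      _ = μ (B ∩ E) + μ (B \ E) := by rw [Set.diff_eq]
      _ = μ B := measure_inter_add_diff B hE
  -- conclude by uniqueness of invariant measures on a compact group
  have key := Measure.isAddInvariant_eq_smul_of_compactSpace ν μ
  have huniv := congrArg (fun m : Measure ℤ_[2] => m Set.univ) key
  simp only [measure_univ, Measure.smul_apply, smul_eq_mul, ENNReal.smul_def] at huniv
  have hone : (Measure.addHaarScalarFactor ν μ : ℝ≥0∞) = 1 := by
    simpa using huniv.symm
  rw [key, ENNReal.smul_def, hone, one_smul]
end

section
/- The 2-adic extension T₂ of the 3x+1 function is ergodic with respect to the normalized Haar measure on ℤ₂: if T₂ : ℤ₂ → ℤ₂ satisfies 2·T₂(x) = 3x + 1 for every x ∈ ℤ₂ not divisible by 2 and 2·T₂(x) = x for every x ∈ ℤ₂ divisible by 2, then T₂ is ergodic for the Haar measure (every measurable set A with T₂⁻¹(A) = A up to measure zero has measure 0 or 1). -/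
open MeasureTheory

/-!
On a residue class `x + 2ℤ₂` the map `T₂` is `x + 2t ↦ T₂ x + u t` with the unit `u = 1` or `3`,
so `T₂^[n]` is `x + 2ⁿt ↦ T₂^[n] x + u t` on `x + 2ⁿℤ₂`, again with `u` a unit. Haar measure is
preserved by `t ↦ c + u t` and scaled by `2⁻ⁿ` under `t ↦ x + 2ⁿt`, hence
`μ (T₂^[n]⁻¹ S ∩ (x + 2ⁿℤ₂)) = 2⁻ⁿ μ S`. For `n = 1`, summing over the two classes mod 2 shows
that `T₂` preserves `μ`. For an invariant set `A` it makes `A` independent of every residue class;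
these form a π-system generating the Borel σ-algebra, so `A` is independent of itself.
-/

open Set Function Topology
open scoped ENNReal

theorem measure_eq_zero_or_one_of_forall_measure_inter_eq_mul {α : Type*} [m : MeasurableSpace α]
    {μ : Measure α} [IsProbabilityMeasure μ] {C : Set (Set α)}
    (hgen : m = MeasurableSpace.generateFrom C) (hC : IsPiSystem C) {A : Set α}
    (hA : MeasurableSet A) (h : ∀ s ∈ C, μ (A ∩ s) = μ A * μ s) : μ A = 0 ∨ μ A = 1 := by
  have hrestrict : μ.restrict A = μ A • μ := by
    refine ext_of_generate_finite C hgen hC (fun s hs => ?_) ?_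
    · rw [Measure.restrict_apply' hA, Measure.smul_apply, smul_eq_mul, inter_comm, h s hs]
    · simp
  have hidem : μ A * μ A = μ A := by
    simpa [Measure.restrict_apply' hA] using (DFunLike.congr_fun hrestrict A).symm
  rcases eq_or_ne (μ A) 0 with h0 | h0
  · exact .inl h0
  · exact .inr ((ENNReal.mul_eq_left h0 (measure_ne_top μ A)).1 hidem)

theorem measure_image_addMonoidHom {G : Type*} [AddGroup G] [TopologicalSpace G]
    [IsTopologicalAddGroup G] [CompactSpace G] [T2Space G] [SecondCountableTopology G]
    [MeasurableSpace G] [BorelSpace G] (μ : Measure G) [μ.IsAddHaarMeasure]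
    [IsProbabilityMeasure μ] {f : G →+ G} (hf : Continuous f) (hinj : Injective f) (s : Set G) :
    μ (f '' s) = μ (range f) * μ s := by
  have hemb : MeasurableEmbedding f := (hf.isClosedEmbedding hinj).measurableEmbedding
  have : (μ.comap f).IsAddLeftInvariant := Measure.IsAddLeftInvariant.comap μ hemb
  have : IsFiniteMeasure (μ.comap f) := ⟨by rw [hemb.comap_apply]; exact measure_lt_top μ _⟩
  have hsmul (t : Set G) : μ (f '' t) = (μ.comap f).addHaarScalarFactor μ • μ t := by
    rw [← hemb.comap_apply, ← Measure.smul_apply, ← Measure.isAddLeftInvariant_eq_smul]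
  rw [← image_univ, hsmul, hsmul, measure_univ, smul_mul_assoc, one_mul]

namespace PadicInt

variable {p : ℕ} [Fact p.Prime]

def residueClass (n : ℕ) (a : ℤ_[p]) : Set ℤ_[p] := {x | (p : ℤ_[p]) ^ n ∣ x - a}

theorem residueClass_eq_range (n : ℕ) (a : ℤ_[p]) :
    residueClass n a = range (fun t => a + (p : ℤ_[p]) ^ n * t) := by
  ext x
  exact ⟨fun ⟨t, ht⟩ => ⟨t, (eq_add_of_sub_eq' ht).symm⟩,
    fun ⟨t, ht⟩ => ⟨t, by rw [← ht, add_sub_cancel_left]⟩⟩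

theorem residueClass_eq_preimage_toZModPow (n : ℕ) (a : ℤ_[p]) :
    residueClass n a = toZModPow n ⁻¹' {toZModPow n a} := by
  ext x
  rw [mem_preimage, mem_singleton_iff, ← sub_eq_zero, ← map_sub, ← RingHom.mem_ker,
    ker_toZModPow, Ideal.mem_span_singleton]
  rfl

theorem residueClass_eq_closedBall (n : ℕ) (a : ℤ_[p]) :
    residueClass n a = Metric.closedBall a ((p : ℝ)⁻¹ ^ n) := by
  ext x
  rw [Metric.mem_closedBall, dist_eq_norm, inv_pow, ← zpow_natCast, ← zpow_neg,
    norm_le_pow_iff_mem_span_pow, Ideal.mem_span_singleton]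
  rfl

theorem isOpen_residueClass (n : ℕ) (a : ℤ_[p]) : IsOpen (residueClass n a) := by
  rw [residueClass_eq_closedBall]
  exact IsUltrametricDist.isOpen_closedBall a (by have := (Fact.out : p.Prime).pos; positivity)

theorem nhds_basis_residueClass (a : ℤ_[p]) :
    (𝓝 a).HasBasis (fun _ => True) (residueClass · a) := by
  simp only [residueClass_eq_closedBall]
  exact Metric.nhds_basis_closedBall_pow (by simp [(Fact.out : p.Prime).pos])
    (inv_lt_one_of_one_lt₀ (by exact_mod_cast (Fact.out : p.Prime).one_lt))

theorem self_mem_residueClass (n : ℕ) (a : ℤ_[p]) : a ∈ residueClass n a := by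
  simp [residueClass]

theorem isTopologicalBasis_residueClass :
    TopologicalSpace.IsTopologicalBasis {s : Set ℤ_[p] | ∃ n a, s = residueClass n a} := by
  refine TopologicalSpace.isTopologicalBasis_of_isOpen_of_nhds ?_ fun a u ha hu => ?_
  · rintro _ ⟨n, a, rfl⟩
    exact isOpen_residueClass n a
  · obtain ⟨n, -, hn⟩ := (nhds_basis_residueClass a).mem_iff.1 (hu.mem_nhds ha)
    exact ⟨_, ⟨n, a, rfl⟩, self_mem_residueClass n a, hn⟩

theorem residueClass_eq_of_mem {n : ℕ} {a x : ℤ_[p]} (hx : x ∈ residueClass n a) :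
    residueClass n a = residueClass n x := by
  ext y
  have hy : y - a = (y - x) + (x - a) := by ring
  show (p : ℤ_[p]) ^ n ∣ y - a ↔ (p : ℤ_[p]) ^ n ∣ y - x
  rw [hy, dvd_add_left hx]

theorem residueClass_anti {m n : ℕ} (hmn : m ≤ n) (a : ℤ_[p]) :
    residueClass n a ⊆ residueClass m a :=
  fun _ hx => (pow_dvd_pow _ hmn).trans hx

theorem isPiSystem_residueClass : IsPiSystem {s : Set ℤ_[p] | ∃ n a, s = residueClass n a} := by
  rintro _ ⟨m, a, rfl⟩ _ ⟨n, b, rfl⟩ ⟨x, hxa, hxb⟩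
  rw [residueClass_eq_of_mem hxa, residueClass_eq_of_mem hxb]
  rcases le_total m n with hmn | hnm
  · exact ⟨n, x, inter_eq_right.2 (residueClass_anti hmn x)⟩
  · exact ⟨m, x, inter_eq_left.2 (residueClass_anti hnm x)⟩

section Measure

variable [MeasurableSpace ℤ_[p]] [BorelSpace ℤ_[p]]

theorem measurableSet_residueClass (n : ℕ) (a : ℤ_[p]) : MeasurableSet (residueClass n a) :=
  (isOpen_residueClass n a).measurableSet

theorem measure_eq_pow_mul_of_forall_measure_inter_residueClass (μ : Measure ℤ_[p])
    {s : Set ℤ_[p]} {n : ℕ} {c : ℝ≥0∞} (h : ∀ a, μ (s ∩ residueClass n a) = c) :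
    μ s = p ^ n * c := by
  have hfiber (z : ZMod (p ^ n)) : μ (s ∩ toZModPow n ⁻¹' {z}) = c := by
    obtain ⟨a, rfl⟩ := ZMod.ringHom_surjective (toZModPow n) z
    rw [← residueClass_eq_preimage_toZModPow, h]
  have hmeas (z : ZMod (p ^ n)) : MeasurableSet (toZModPow n ⁻¹' {z}) := by
    obtain ⟨a, rfl⟩ := ZMod.ringHom_surjective (toZModPow n) z
    rw [← residueClass_eq_preimage_toZModPow]
    exact measurableSet_residueClass n a
  calc μ s = μ.restrict s (toZModPow n ⁻¹' ↑(Finset.univ : Finset (ZMod (p ^ n)))) := by simp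
    _ = ∑ z : ZMod (p ^ n), μ (s ∩ toZModPow n ⁻¹' {z}) := by
      rw [← sum_measure_preimage_singleton _ fun z _ => hmeas z]
      simp only [Measure.restrict_apply (hmeas _), inter_comm]
    _ = p ^ n * c := by simp [hfiber]

variable (μ : Measure ℤ_[p]) [μ.IsAddHaarMeasure]

theorem measurePreserving_add_mul {u : ℤ_[p]} (hu : IsUnit u) (c : ℤ_[p]) :
    MeasurePreserving (fun t => c + u * t) μ μ :=
  (measurePreserving_add_left μ c).comp <| AddMonoidHom.measurePreserving
    (f := AddMonoidHom.mulLeft u) (continuous_const_mul u)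
    (IsUnit.isUnit_iff_mulLeft_bijective.1 hu).2 rfl

variable [IsProbabilityMeasure μ]

theorem measure_residueClass (n : ℕ) (a : ℤ_[p]) :
    μ (residueClass n a) = ((p : ℝ≥0∞) ^ n)⁻¹ := by
  have htranslate (b : ℤ_[p]) : μ (residueClass n b) = μ (residueClass n 0) := by
    rw [← measure_preimage_add μ (-b) (residueClass n 0)]
    congr 1
    ext x
    simp [residueClass, neg_add_eq_sub]
  have htotal := measure_eq_pow_mul_of_forall_measure_inter_residueClass μ (s := univ) (n := n)
    (fun b => by rw [univ_inter, htranslate])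
  rw [measure_univ, mul_comm] at htotal
  rw [htranslate, ENNReal.eq_inv_of_mul_eq_one_left htotal.symm]

theorem measure_image_add_pow_mul (n : ℕ) (a : ℤ_[p]) (s : Set ℤ_[p]) :
    μ ((fun t => a + (p : ℤ_[p]) ^ n * t) '' s) = ((p : ℝ≥0∞) ^ n)⁻¹ * μ s := by
  have hp : (p : ℤ_[p]) ^ n ≠ 0 := pow_ne_zero n (Nat.cast_ne_zero.2 (Fact.out : p.Prime).ne_zero)
  have hrange : range (AddMonoidHom.mulLeft ((p : ℤ_[p]) ^ n)) = residueClass n 0 := by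
    simp [residueClass_eq_range]
  have himage : (fun t => a + (p : ℤ_[p]) ^ n * t) '' s =
      (a + ·) '' (AddMonoidHom.mulLeft ((p : ℤ_[p]) ^ n) '' s) := by
    rw [image_image]
    rfl
  rw [himage, image_add_left, measure_preimage_add,
    measure_image_addMonoidHom μ (continuous_const_mul _) (mul_right_injective₀ hp), hrange,
    measure_residueClass]

end Measure

/-- On each residue class `x + pℤ_p`, `T` is affine with slope `u / p` for a unit `u`. -/
def IsLocallyExpandingAffine (T : ℤ_[p] → ℤ_[p]) : Prop :=
  ∀ x, ∃ u : ℤ_[p], IsUnit u ∧ ∀ t, T (x + p * t) = T x + u * t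

namespace IsLocallyExpandingAffine

variable {T : ℤ_[p] → ℤ_[p]} (hT : IsLocallyExpandingAffine T)
include hT

theorem exists_map_add_pow_succ_mul (x : ℤ_[p]) :
    ∃ u : ℤ_[p], IsUnit u ∧ ∀ n t, T (x + p ^ (n + 1) * t) = T x + p ^ n * (u * t) := by
  obtain ⟨u, hu, hx⟩ := hT x
  refine ⟨u, hu, fun n t => ?_⟩
  rw [pow_succ', mul_assoc, hx]
  ring

theorem iterate (n : ℕ) (x : ℤ_[p]) :
    ∃ u : ℤ_[p], IsUnit u ∧ ∀ t, T^[n] (x + p ^ n * t) = T^[n] x + u * t := by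
  induction n generalizing x with
  | zero => exact ⟨1, isUnit_one, fun t => by simp⟩
  | succ n ih =>
    obtain ⟨u, hu, hx⟩ := hT.exists_map_add_pow_succ_mul x
    obtain ⟨v, hv, hTx⟩ := ih (T x)
    refine ⟨v * u, hv.mul hu, fun t => ?_⟩
    rw [iterate_succ_apply, iterate_succ_apply, hx, hTx, mul_assoc]

theorem continuous : Continuous T := by
  refine continuous_iff_continuousAt.2 fun x => ?_
  refine ((nhds_basis_residueClass x).tendsto_iff (nhds_basis_residueClass (T x))).2
    fun n _ => ⟨n + 1, trivial, ?_⟩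
  obtain ⟨u, -, hx⟩ := hT.exists_map_add_pow_succ_mul x
  intro y hy
  rw [residueClass_eq_range] at hy
  obtain ⟨t, rfl⟩ := hy
  exact ⟨u * t, by rw [hx, add_sub_cancel_left]⟩

variable [MeasurableSpace ℤ_[p]] [BorelSpace ℤ_[p]] (μ : Measure ℤ_[p]) [μ.IsAddHaarMeasure]
  [IsProbabilityMeasure μ]

theorem measure_preimage_iterate_inter_residueClass (n : ℕ) (a : ℤ_[p]) {s : Set ℤ_[p]}
    (hs : MeasurableSet s) : μ (T^[n] ⁻¹' s ∩ residueClass n a) = ((p : ℝ≥0∞) ^ n)⁻¹ * μ s := by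
  obtain ⟨u, hu, ha⟩ := hT.iterate n a
  have hpullback : T^[n] ⁻¹' s ∩ residueClass n a =
      (fun t => a + (p : ℤ_[p]) ^ n * t) '' ((fun t => T^[n] a + u * t) ⁻¹' s) := by
    rw [residueClass_eq_range, ← image_preimage_eq_inter_range, ← preimage_comp]
    simp only [comp_def, ha]
  rw [hpullback, measure_image_add_pow_mul, (measurePreserving_add_mul μ hu _).measure_preimage
    hs.nullMeasurableSet]

theorem measurePreserving : MeasurePreserving T μ μ := by
  refine ⟨hT.continuous.measurable, Measure.ext fun s hs => ?_⟩
  rw [Measure.map_apply hT.continuous.measurable hs,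
    measure_eq_pow_mul_of_forall_measure_inter_residueClass μ (n := 1)
      (by simpa using hT.measure_preimage_iterate_inter_residueClass μ 1 · hs),
    pow_one, ← mul_assoc, ENNReal.mul_inv_cancel (by simp [(Fact.out : p.Prime).ne_zero])
      (by simp), one_mul]

theorem ergodic : Ergodic T μ := by
  refine ⟨hT.measurePreserving μ, ⟨fun A hA hTA => ?_⟩⟩
  have hzero_one : μ A = 0 ∨ μ A = 1 := by
    refine measure_eq_zero_or_one_of_forall_measure_inter_eq_mul
      (BorelSpace.measurable_eq.trans isTopologicalBasis_residueClass.borel_eq_generateFrom)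
      isPiSystem_residueClass hA ?_
    rintro _ ⟨n, a, rfl⟩
    have hA_iterate : T^[n] ⁻¹' A = A := IsFixedPt.preimage_iterate hTA n
    calc μ (A ∩ residueClass n a) = μ (T^[n] ⁻¹' A ∩ residueClass n a) := by rw [hA_iterate]
      _ = ((p : ℝ≥0∞) ^ n)⁻¹ * μ A := hT.measure_preimage_iterate_inter_residueClass μ n a hA
      _ = μ A * μ (residueClass n a) := by rw [measure_residueClass, mul_comm]
  refine Filter.eventuallyConst_set'.2 (hzero_one.imp ae_eq_empty.2 fun h => ?_)
  exact ae_eq_univ.2 ((prob_compl_eq_zero_iff hA).2 h)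

end IsLocallyExpandingAffine

end PadicInt

theorem isLocallyExpandingAffine_of_two_mul_eq {T : ℤ_[2] → ℤ_[2]}
    (hodd : ∀ x : ℤ_[2], ¬ (2 ∣ x) → 2 * T x = 3 * x + 1)
    (heven : ∀ x : ℤ_[2], 2 ∣ x → 2 * T x = x) : PadicInt.IsLocallyExpandingAffine T := by
  intro x
  simp only [Nat.cast_ofNat]
  have hparity (t : ℤ_[2]) : 2 ∣ x + 2 * t ↔ 2 ∣ x := dvd_add_left (dvd_mul_right 2 t)
  by_cases hx : 2 ∣ x
  · refine ⟨1, isUnit_one, fun t => mul_left_cancel₀ two_ne_zero ?_⟩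
    linear_combination heven _ ((hparity t).2 hx) - heven x hx
  · have h3 : IsUnit (3 : ℤ_[2]) := by
      simpa using PadicInt.isUnit_iff.2 ((PadicInt.norm_natCast_eq_one_iff (p := 2) (n := 3)).2
        (by norm_num))
    refine ⟨3, h3, fun t => mul_left_cancel₀ two_ne_zero ?_⟩
    linear_combination hodd _ (mt (hparity t).1 hx) - hodd x hx

/-- The 2-adic extension of the 3x+1 function is ergodic for the normalized Haar
measure on `ℤ₂`: every measurable set `A` with `T₂⁻¹(A) = A` up to measure zero
has measure 0 or 1. -/
theorem two_adic_extension_ergodic (T₂ : ℤ_[2] → ℤ_[2])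
    (hodd : ∀ x : ℤ_[2], ¬ (2 ∣ x) → 2 * T₂ x = 3 * x + 1)
    (heven : ∀ x : ℤ_[2], 2 ∣ x → 2 * T₂ x = x)
    (μ : Measure ℤ_[2]) [μ.IsAddHaarMeasure] [IsProbabilityMeasure μ] :
    ∀ A : Set ℤ_[2], MeasurableSet A → (T₂ ⁻¹' A) =ᵐ[μ] A → μ A = 0 ∨ μ A = 1 := by
  intro A hA hinv
  have hT₂ : Ergodic T₂ μ := (isLocallyExpandingAffine_of_two_mul_eq hodd heven).ergodic μ
  rcases hT₂.quasiErgodic.ae_empty_or_univ₀ hA.nullMeasurableSet hinv with hA_null | hA_full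
  · exact .inl (by rw [measure_congr hA_null, measure_empty])
  · exact .inr (by rw [measure_congr hA_full, measure_univ])
end

section
/- The 2-adic extension T₂ of the 3x+1 function is topologically and metrically conjugate to the 2-adic shift map: there exists a homeomorphism Φ : ℤ₂ → ℤ₂ which preserves the normalized Haar measure and satisfies T₂(Φ(x)) = Φ(S(x)) for all x ∈ ℤ₂, where S : ℤ₂ → ℤ₂ is the shift map defined by 2·S(x) = x if 2 divides x and 2·S(x) = x − 1 otherwise. -/
open MeasureTheory

/-!
Let `Q x = ∑ₖ εₖ 2ᵏ`, where `εₖ ∈ {0, 1}` is the parity of `T₂^[k] x`. By construction the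
shift `S` strips the first digit, so `S ∘ Q = Q ∘ T₂`. On each residue class mod 2 the map
`T₂` multiplies 2-adic distances by exactly 2 (because 3 is a 2-adic unit), and comparing digits
shows that `Q` is an isometry of `ℤ₂`. An isometry of a compact metric space into itself is onto,
so `Φ = Q⁻¹` is a homeomorphism. Finally, in an ultrametric group the balls form a π-system
generating the Borel sets; an isometric bijection maps balls to balls of the same radius, and all
balls of a given radius have the same Haar measure, so `Φ` preserves Haar measure.
-/

open Metric

theorem Isometry.surjective_of_compactSpace {X : Type*} [MetricSpace X] [CompactSpace X]
    {f : X → X} (hf : Isometry f) : Function.Surjective f := by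
  intro y
  by_contra hy
  obtain ⟨ε, hε, hfar⟩ : ∃ ε > 0, ∀ x, ε ≤ dist y (f x) := by
    obtain ⟨ε, hε, hball⟩ :=
      isOpen_iff.mp (isCompact_range hf.continuous).isClosed.isOpen_compl y hy
    exact ⟨ε, hε, fun x => not_lt.mp fun h => hball (mem_ball'.mpr h) ⟨x, rfl⟩⟩
  -- so the orbit of `y` is `ε`-separated, which compactness forbids
  have hsep : ∀ m n, ε ≤ dist (f^[m] y) (f^[m] (f^[n + 1] y)) := by
    intro m n
    induction m with
    | zero => simpa only [Function.iterate_succ_apply', Function.iterate_zero_apply] using hfar _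
    | succ m ih => rwa [Function.iterate_succ_apply', Function.iterate_succ_apply', hf.dist_eq]
  obtain ⟨a, φ, hφ, hlim⟩ := CompactSpace.tendsto_subseq fun n => f^[n] y
  obtain ⟨N, hN⟩ := cauchySeq_iff'.mp hlim.cauchySeq ε hε
  obtain ⟨k, hk⟩ := Nat.exists_eq_add_of_lt (hφ N.lt_succ_self)
  have hclose := hN (N + 1) N.le_succ
  rw [Function.comp_apply, Function.comp_apply, hk, add_assoc, Function.iterate_add_apply,
    dist_comm] at hclose
  exact (hsep (φ N) k).not_gt hclose

theorem IsometryEquiv.measurePreserving_addHaar {G : Type*} [NormedAddCommGroup G]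
    [IsUltrametricDist G] [SecondCountableTopology G] [MeasurableSpace G] [BorelSpace G]
    (μ : Measure G) [μ.IsAddHaarMeasure] [IsFiniteMeasure μ] (e : G ≃ᵢ G) :
    MeasurePreserving e μ μ := by
  refine ⟨e.continuous.measurable, ?_⟩
  have hbasis : TopologicalSpace.IsTopologicalBasis {s : Set G | ∃ x r, s = ball x r} :=
    .of_hasBasis_nhds fun a => nhds_basis_ball.to_hasBasis'
      (fun r hr => ⟨ball a r, ⟨⟨a, r, rfl⟩, mem_ball_self hr⟩, subset_rfl⟩)
      (fun _ ⟨⟨_, _, hs⟩, ha⟩ => hs ▸ isOpen_ball.mem_nhds (hs ▸ ha))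
  refine ext_of_generate_finite _ (BorelSpace.measurable_eq.trans hbasis.borel_eq_generateFrom)
    ?_ ?_ ?_
  · rintro _ ⟨x, r, rfl⟩ _ ⟨y, s, rfl⟩ hne
    rcases IsUltrametricDist.ball_subset_trichotomy x y r s with h | h | h
    · exact ⟨x, r, Set.inter_eq_left.mpr h⟩
    · exact ⟨y, s, Set.inter_eq_right.mpr h⟩
    · exact absurd h (Set.not_disjoint_iff_nonempty_inter.mpr hne)
  · rintro _ ⟨x, r, rfl⟩
    rw [Measure.map_apply e.continuous.measurable measurableSet_ball, e.preimage_ball,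
      Measure.addHaar_ball_center, Measure.addHaar_ball_center μ x]
  · rw [Measure.map_apply e.continuous.measurable .univ, Set.preimage_univ]

namespace PadicInt

variable {p : ℕ} [Fact p.Prime]

lemma norm_p_lt_one : ‖(p : ℤ_[p])‖ < 1 :=
  (norm_lt_one_iff_dvd _).mpr dvd_rfl

lemma zmodRepr_eq_of_dvd_sub {x y : ℤ_[p]} (h : (p : ℤ_[p]) ∣ x - y) :
    x.zmodRepr = y.zmodRepr := by
  refine zmodRepr_unique x _ (zmodRepr_lt_p y) ?_
  have hy := sub_zmodRepr_mem y
  rw [maximalIdeal_eq_span_p, Ideal.mem_span_singleton] at hy ⊢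
  simpa using dvd_add h hy

lemma summable_mul_pow (c : ℕ → ℤ_[p]) : Summable fun k => c k * (p : ℤ_[p]) ^ k := by
  refine NonarchimedeanAddGroup.summable_of_tendsto_cofinite_zero ?_
  rw [Nat.cofinite_eq_atTop]
  refine squeeze_zero_norm (fun k => ?_)
    (tendsto_pow_atTop_nhds_zero_of_lt_one (norm_nonneg _) (norm_p_lt_one (p := p)))
  rw [norm_mul, norm_pow]
  exact mul_le_of_le_one_left (by positivity) (norm_le_one _)

/-- For `p = 2` and the `3x+1` map this is Lagarias' parity-vector map `Q_∞`. -/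
noncomputable def itinerary (T : ℤ_[p] → ℤ_[p]) (x : ℤ_[p]) : ℤ_[p] :=
  ∑' k : ℕ, ((T^[k] x).zmodRepr : ℤ_[p]) * (p : ℤ_[p]) ^ k

variable (T : ℤ_[p] → ℤ_[p])

lemma itinerary_eq_zmodRepr_add (x : ℤ_[p]) :
    itinerary T x = x.zmodRepr + p * itinerary T (T x) := by
  rw [itinerary, (summable_mul_pow _).tsum_eq_zero_add, itinerary,
    ← (summable_mul_pow _).tsum_mul_left]
  simp only [Function.iterate_succ_apply, Function.iterate_zero_apply, pow_succ, pow_zero]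
  congr 1
  · ring
  · exact tsum_congr fun k => by ring

lemma dvd_itinerary_sub_self (x : ℤ_[p]) : (p : ℤ_[p]) ∣ itinerary T x - x := by
  have hx := sub_zmodRepr_mem x
  rw [maximalIdeal_eq_span_p, Ideal.mem_span_singleton] at hx
  rw [itinerary_eq_zmodRepr_add, show (x.zmodRepr : ℤ_[p]) + p * itinerary T (T x) - x =
    p * itinerary T (T x) - (x - x.zmodRepr) by ring]
  exact dvd_sub (dvd_mul_right _ _) hx

section Expanding

variable {T} (hT : ∀ x y, (p : ℤ_[p]) ∣ x - y → ‖x - y‖ = ‖(p : ℤ_[p])‖ * ‖T x - T y‖)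
include hT

lemma norm_itinerary_sub_of_norm_sub_eq_pow (n : ℕ) {x y : ℤ_[p]}
    (hxy : ‖x - y‖ = ‖(p : ℤ_[p]) ^ n‖) :
    ‖itinerary T x - itinerary T y‖ = ‖x - y‖ := by
  induction n generalizing x y with
  | zero =>
    rw [pow_zero, norm_one] at hxy
    have hndvd : ¬ (p : ℤ_[p]) ∣ x - y := by
      rw [← norm_lt_one_iff_dvd, hxy]; exact lt_irrefl 1
    have hcong : (p : ℤ_[p]) ∣ (itinerary T x - itinerary T y) - (x - y) := by
      simpa [sub_sub_sub_comm] using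
        dvd_sub (dvd_itinerary_sub_self T x) (dvd_itinerary_sub_self T y)
    rw [hxy]
    refine le_antisymm (norm_le_one _) (not_lt.mp fun h => hndvd ?_)
    exact (dvd_sub_right ((norm_lt_one_iff_dvd _).mp h)).mp hcong
  | succ n ih =>
    have hdvd : (p : ℤ_[p]) ∣ x - y := by
      rw [← norm_lt_one_iff_dvd, hxy, norm_pow]
      exact pow_lt_one₀ (norm_nonneg _) norm_p_lt_one n.succ_ne_zero
    have hTxy : ‖T x - T y‖ = ‖(p : ℤ_[p]) ^ n‖ := by
      have := hT x y hdvd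
      rw [hxy, pow_succ', norm_mul] at this
      exact (mul_left_cancel₀ (norm_ne_zero_iff.mpr (NeZero.ne _)) this).symm
    rw [itinerary_eq_zmodRepr_add T x, itinerary_eq_zmodRepr_add T y, zmodRepr_eq_of_dvd_sub hdvd,
      add_sub_add_left_eq_sub, ← mul_sub, norm_mul, ih hTxy, hT x y hdvd]

lemma isometry_itinerary : Isometry (itinerary T) := by
  refine .of_dist_eq fun x y => ?_
  rw [dist_eq_norm, dist_eq_norm]
  rcases eq_or_ne x y with rfl | hne
  · simp
  · exact norm_itinerary_sub_of_norm_sub_eq_pow hT _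
      (by rw [norm_eq_zpow_neg_valuation (sub_ne_zero.mpr hne), norm_p_pow])

end Expanding

lemma semiconj_itinerary {S : ℤ_[p] → ℤ_[p]} (hS : ∀ x, p * S x = x - x.zmodRepr) :
    Function.Semiconj (itinerary T) T S := fun x => by
  refine (mul_left_cancel₀ (NeZero.ne (p : ℤ_[p])) ?_).symm
  rw [hS, zmodRepr_eq_of_dvd_sub (dvd_itinerary_sub_self T x), itinerary_eq_zmodRepr_add T x,
    add_sub_cancel_left]

end PadicInt

section Collatz

open PadicInt

variable {T S : ℤ_[2] → ℤ_[2]}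

lemma norm_sub_eq_of_collatz (hTodd : ∀ x : ℤ_[2], ¬ (2 ∣ x) → 2 * T x = 3 * x + 1)
    (hTeven : ∀ x : ℤ_[2], 2 ∣ x → 2 * T x = x) {x y : ℤ_[2]} (h : 2 ∣ x - y) :
    ‖x - y‖ = ‖(2 : ℤ_[2])‖ * ‖T x - T y‖ := by
  rw [← norm_mul, mul_sub]
  by_cases hx : (2 : ℤ_[2]) ∣ x
  · rw [hTeven x hx, hTeven y ((dvd_iff_dvd_of_dvd_sub h).mp hx)]
  · have hy : ¬ (2 : ℤ_[2]) ∣ y := mt (dvd_iff_dvd_of_dvd_sub h).mpr hx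
    have hunit : ‖(3 : ℤ_[2])‖ = 1 := by
      simpa using norm_natCast_eq_one_iff (p := 2) (n := 3) |>.mpr (by norm_num)
    rw [hTodd x hx, hTodd y hy, add_sub_add_right_eq_sub, ← mul_sub, norm_mul, hunit, one_mul]

lemma two_mul_eq_sub_zmodRepr_of_shift (hSeven : ∀ x : ℤ_[2], 2 ∣ x → 2 * S x = x)
    (hSodd : ∀ x : ℤ_[2], ¬ (2 ∣ x) → 2 * S x = x - 1) (x : ℤ_[2]) :
    2 * S x = x - x.zmodRepr := by
  have hrepr : x.zmodRepr = 0 ↔ (2 : ℤ_[2]) ∣ x := by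
    simpa using zmodRepr_eq_zero_iff_dvd (x := x)
  by_cases hx : (2 : ℤ_[2]) ∣ x
  · rw [hSeven x hx, hrepr.mpr hx, Nat.cast_zero, sub_zero]
  · have hone : x.zmodRepr = 1 := by
      have := zmodRepr_lt_p x
      have := mt hrepr.mp hx
      omega
    rw [hSodd x hx, hone, Nat.cast_one]

end Collatz

/-- The 2-adic extension `T₂` of the 3x+1 function is topologically and metrically
conjugate to the 2-adic shift map `S`: there is a Haar-measure-preserving
homeomorphism `Φ` of `ℤ₂` with `T₂ ∘ Φ = Φ ∘ S`. -/
theorem two_adic_extension_conjugate_to_shift (T₂ S : ℤ_[2] → ℤ_[2])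
    (hTodd : ∀ x : ℤ_[2], ¬ (2 ∣ x) → 2 * T₂ x = 3 * x + 1)
    (hTeven : ∀ x : ℤ_[2], 2 ∣ x → 2 * T₂ x = x)
    (hSeven : ∀ x : ℤ_[2], 2 ∣ x → 2 * S x = x)
    (hSodd : ∀ x : ℤ_[2], ¬ (2 ∣ x) → 2 * S x = x - 1)
    (μ : Measure ℤ_[2]) [μ.IsAddHaarMeasure] [IsProbabilityMeasure μ] :
    ∃ Φ : ℤ_[2] ≃ₜ ℤ_[2], MeasurePreserving Φ μ μ ∧ ∀ x : ℤ_[2], T₂ (Φ x) = Φ (S x) := by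
  have hQ : Isometry (PadicInt.itinerary T₂) := PadicInt.isometry_itinerary fun x y h => by
    simpa only [Nat.cast_ofNat] using norm_sub_eq_of_collatz hTodd hTeven (by simpa using h)
  have hconj : Function.Semiconj (PadicInt.itinerary T₂) T₂ S :=
    PadicInt.semiconj_itinerary T₂ fun x => by
      simpa only [Nat.cast_ofNat] using two_mul_eq_sub_zmodRepr_of_shift hSeven hSodd x
  let Ψ : ℤ_[2] ≃ᵢ ℤ_[2] :=
    ⟨.ofBijective _ ⟨hQ.injective, hQ.surjective_of_compactSpace⟩, hQ⟩
  have hΨ : ∀ y, PadicInt.itinerary T₂ (Ψ.symm y) = y := Ψ.apply_symm_apply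
  refine ⟨Ψ.symm.toHomeomorph, Ψ.symm.measurePreserving_addHaar μ, fun x => Ψ.injective ?_⟩
  change PadicInt.itinerary T₂ (T₂ (Ψ.symm x)) = PadicInt.itinerary T₂ (Ψ.symm (S x))
  rw [hconj, hΨ, hΨ]
end
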